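/- If P and Q in R[x][∂] are both R-primitive, then their (noncommutative Ore) product PQ is R-primitive. -/

import Mathlib

/-!
Reduce modulo a prime. A non-unit `s ∈ R` has a divisor `t` generating a maximal ideal, and
`I = (C t)` is a prime ideal of `R[x]` with `δ(I) ⊆ I` and `σ⁻¹(I) = I`, because `σ` and `δ`
are `R`-linear. If `i₀`, `j₀` are the last indices of coefficients of `P`, `Q` outside `I`, then,
modulo `I`, the coefficient of `∂^(i₀+j₀)` in `P·Q` is `p i₀ · σ^i₀ (q j₀)`, which is not in `I`.
-/

open Polynomial

noncomputable section

/-- `Q_R(x)`, the field of rational functions over the fraction field `Q_R` of `R`,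
realized as the fraction field of `R[x]`. -/
abbrev QX (R : Type) [CommRing R] [IsDomain R] := FractionRing (Polynomial R)

/-- Data of an Ore algebra `R[x][∂; σ, δ] ⊆ Q_R(x)[∂; σ, δ]`.
The ring `A` plays the role of `Q_R(x)[∂]`; `ι` embeds the coefficient field,
`D` is the Ore variable `∂`, subject to the commutation rule `∂·p = σ(p)·∂ + δ(p)`,
and every element of `A` has a unique finite coefficient expansion `Σ ι(cᵢ)·∂^i`. -/
structure OreAlg (R : Type) [CommRing R] [IsDomain R] (A : Type) [Ring A] where
  σ : Polynomial R ≃+* Polynomial R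
  σ_fix : ∀ r : R, σ (C r) = C r
  δ : Polynomial R → Polynomial R
  δ_add : ∀ f g, δ (f + g) = δ f + δ g
  δ_linear : ∀ (r : R) (f), δ (C r * f) = C r * δ f
  ι : QX R →+* A
  ι_inj : Function.Injective ι
  D : A
  comm_rule : ∀ p : Polynomial R,
    D * ι (algebraMap (Polynomial R) (QX R) p)
      = ι (algebraMap (Polynomial R) (QX R) (σ p)) * D
        + ι (algebraMap (Polynomial R) (QX R) (δ p))
  δ_leibniz : ∀ f g, δ (f * g) = σ f * δ g + δ f * g
  coeff : A → ℕ → QX R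
  coeff_inj : ∀ P Q : A, (∀ i, coeff P i = coeff Q i) → P = Q
  coeff_add : ∀ P Q i, coeff (P + Q) i = coeff P i + coeff Q i
  coeff_smul : ∀ (f : QX R) (P : A) (i), coeff (ι f * P) i = f * coeff P i
  coeff_bdd : ∀ P : A, ∃ N, ∀ i, N < i → coeff P i = 0
  coeff_mk : ∀ (N : ℕ) (c : ℕ → QX R), (∀ i, N < i → c i = 0) →
    ∀ j, coeff (∑ i ∈ Finset.range (N + 1), ι (c i) * D ^ i) j = c j

namespace OreAlg

variable {R : Type} [CommRing R] [IsDomain R] {A : Type} [Ring A] (O : OreAlg R A)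

/-- The embedding of `R[x]` into the Ore algebra. -/
def ιp (f : Polynomial R) : A := O.ι (algebraMap (Polynomial R) (QX R) f)

/-- The `i`-th `∂`-coefficient of `P` lies in `R[x]`. -/
def PolyCoeff (P : A) (i : ℕ) : Prop :=
  ∃ f : Polynomial R, O.coeff P i = algebraMap (Polynomial R) (QX R) f

/-- `P` belongs to the subring `R[x][∂]` of `Q_R(x)[∂]`. -/
def InB (P : A) : Prop := ∀ i, O.PolyCoeff P i

/-- The order (degree in `∂`) of an operator. -/
def ord (P : A) : ℕ := sSup {i | O.coeff P i ≠ 0}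

/-- The leading coefficient (with respect to `∂`), in `Q_R(x)`. -/
def lc (P : A) : QX R := O.coeff P (O.ord P)

/-- The contraction ideal `cont(L) = Q_R(x)[∂]·L ∩ R[x][∂]`. -/
def cont (L : A) : Set A := {P | O.InB P ∧ ∃ Q : A, P = Q * L}

/-- The `k`-th submodule `M_k(L) = {P ∈ cont(L) : deg_∂ P ≤ k}`. -/
def M (L : A) (k : ℕ) : Set A := {P | P ∈ O.cont L ∧ O.ord P ≤ k}

/-- The `k`-th coefficient ideal `I_k = {[∂^k]P : P ∈ M_k} ∪ {0}` (as a set of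
polynomials; `0` arises from `P = 0`). -/
def Icoeff (L : A) (k : ℕ) : Set (Polynomial R) :=
  {f | ∃ P ∈ O.M L k, O.coeff P k = algebraMap (Polynomial R) (QX R) f}

end OreAlg

/-- `gcd(p, w) = 1` in `R[x]`: every common divisor is a unit. -/
def Copr {R : Type} [CommRing R] (p w : Polynomial R) : Prop :=
  ∀ d : Polynomial R, d ∣ p → d ∣ w → IsUnit d

namespace OreAlg

variable {R : Type} [CommRing R] [IsDomain R] {A : Type} [Ring A] (O : OreAlg R A)

/-- `P` is a `p`-removing operator for `L` over `R[x]`, of order `k`: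
`P·L ∈ R[x][∂]` and `σ^{-k}(lc_∂(P·L)) = (w/(v·p))·lc_∂(L)` with `gcd(p, w) = 1`. -/
def IsRemoving (L : A) (p : Polynomial R) (k : ℕ) (P : A) : Prop :=
  O.ord P = k ∧ O.InB (P * L) ∧
  ∃ w v t l : Polynomial R, v ≠ 0 ∧ Copr p w ∧
    O.lc (P * L) = algebraMap (Polynomial R) (QX R) t ∧
    O.lc L = algebraMap (Polynomial R) (QX R) l ∧
    (⇑O.σ.symm)^[k] t * (v * p) = w * l

/-- `p` is removable from `L` (at some order). -/
def Removable (L : A) (p : Polynomial R) : Prop :=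
  ∃ k P, O.IsRemoving L p k P

/-- Factorization data for `lc_∂(L) = c·p₁^{e₁}⋯p_m^{e_m}`, with `c ∈ R` and the
`pᵢ ∈ R[x] \ R` irreducible and pairwise coprime; `L` has order `r > 0`. -/
def Factored (L : A) (r m : ℕ) (c : R) (p : Fin m → Polynomial R)
    (e : Fin m → ℕ) : Prop :=
  O.ord L = r ∧ 0 < r ∧ c ≠ 0 ∧
  O.lc L = algebraMap (Polynomial R) (QX R) (C c * ∏ i, p i ^ e i) ∧
  (∀ i, Irreducible (p i) ∧ 0 < (p i).natDegree) ∧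
  (∀ i j, i ≠ j → Copr (p i) (p j))

/-- `T` is a desingularized operator for `L`: `T ∈ cont(L)` and
`σ^{r-k}(lc_∂(T)) = (a/(b·∏ pᵢ^{kᵢ}))·lc_∂(L)` with `a, b ∈ R`, where each
`pᵢ^{dᵢ}` with `dᵢ > kᵢ` is non-removable from `L`. -/
def Desing (L : A) (r m : ℕ) (c : R) (p : Fin m → Polynomial R)
    (e : Fin m → ℕ) (T : A) : Prop :=
  T ∈ O.cont L ∧ r ≤ O.ord T ∧
  ∃ (a b : R) (k : Fin m → ℕ) (t l : Polynomial R),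
    b ≠ 0 ∧ (∀ i, k i ≤ e i) ∧
    O.lc T = algebraMap (Polynomial R) (QX R) t ∧
    O.lc L = algebraMap (Polynomial R) (QX R) l ∧
    (⇑O.σ.symm)^[O.ord T - r] t * (C b * ∏ i, p i ^ k i) = C a * l ∧
    (∀ i (d : ℕ), k i < d → ¬ O.Removable L (p i ^ d))

/-- The left ideal of `R[x][∂]` generated by a set `S ⊆ R[x][∂]`. -/
def LIdeal (S : Set A) : Set A :=
  {P | ∃ (n : ℕ) (co s : Fin n → A), (∀ i, O.InB (co i)) ∧ (∀ i, s i ∈ S) ∧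
    P = ∑ i, co i * s i}

/-- The constant `a ∈ R` viewed inside the Ore algebra. -/
def cst (a : R) : A := O.ιp (C a)

/-- The saturation `I : a^∞ = {P ∈ R[x][∂] : aⁱ·P ∈ I for some i}`. -/
def sat (I : Set A) (a : R) : Set A :=
  {P | O.InB P ∧ ∃ i : ℕ, O.cst a ^ i * P ∈ I}

end OreAlg

lemma exists_greatest_not_of_forall_lt {P : ℕ → Prop} {N : ℕ} (hN : ∀ i, N < i → P i)
    (h : ∃ i, ¬P i) : ∃ i, ¬P i ∧ ∀ j, i < j → P j := by
  classical
  obtain ⟨i, hi⟩ := h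
  have hiN : i ≤ N := by_contra fun h' => hi (hN i (by omega))
  refine ⟨Nat.findGreatest (fun i => ¬P i) N,
    Nat.findGreatest_spec (P := fun i => ¬P i) hiN hi, fun j hj => ?_⟩
  by_cases hjN : j ≤ N
  · exact not_not.mp (Nat.findGreatest_is_greatest hj hjN)
  · exact hN j (by omega)

section DMulCoeff

variable {S : Type*} [CommRing S] (σ : S →+* S) (δ : S → S)

/-- If `Q = Σ c n ∂^n`, then `∂·Q = Σ dMulCoeff σ δ c n ∂^n`, by the rule
`∂·c = σ(c)·∂ + δ(c)`. -/
def dMulCoeff (c : ℕ → S) : ℕ → S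
  | 0 => δ (c 0)
  | n + 1 => σ (c n) + δ (c (n + 1))

variable {σ δ} {I : Ideal S} (hσ : ∀ x ∈ I, σ x ∈ I) (hδ : ∀ x ∈ I, δ x ∈ I)
include hσ hδ

lemma dMulCoeff_mem_of_lt {c : ℕ → S} {N : ℕ} (hc : ∀ j, N < j → c j ∈ I) :
    ∀ j, N + 1 < j → dMulCoeff σ δ c j ∈ I
  | j + 1, hj => I.add_mem (hσ _ (hc j (by omega))) (hδ _ (hc (j + 1) (by omega)))

omit hσ in
lemma dMulCoeff_succ_sub_mem {c : ℕ → S} {N : ℕ} (hc : c (N + 1) ∈ I) :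
    dMulCoeff σ δ c (N + 1) - σ (c N) ∈ I := by
  simpa [dMulCoeff] using hδ _ hc

lemma iterate_dMulCoeff_mem_of_lt {c : ℕ → S} {N : ℕ} (hc : ∀ j, N < j → c j ∈ I)
    (i : ℕ) : ∀ j, N + i < j → (dMulCoeff σ δ)^[i] c j ∈ I := by
  induction i with
  | zero => simpa using hc
  | succ i ih =>
    rw [Function.iterate_succ_apply']
    exact dMulCoeff_mem_of_lt hσ hδ ih

lemma iterate_dMulCoeff_sub_mem {c : ℕ → S} {N : ℕ} (hc : ∀ j, N < j → c j ∈ I)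
    (i : ℕ) : (dMulCoeff σ δ)^[i] c (N + i) - σ^[i] (c N) ∈ I := by
  induction i with
  | zero => simp
  | succ i ih =>
    rw [Function.iterate_succ_apply', Function.iterate_succ_apply', ← add_assoc]
    have hlead := dMulCoeff_succ_sub_mem (σ := σ) hδ
      (iterate_dMulCoeff_mem_of_lt hσ hδ hc i (N + i + 1) (by omega))
    simpa [map_sub] using I.add_mem hlead (hσ _ ih)

omit hσ in
lemma exists_sum_mul_iterate_dMulCoeff_notMem (hI : I.IsPrime) (hσ : ∀ x, σ x ∈ I ↔ x ∈ I)
    {p q : ℕ → S} {N M : ℕ} (hpN : ∀ i, N < i → p i ∈ I) (hqM : ∀ j, M < j → q j ∈ I)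
    (hp : ∃ i, p i ∉ I) (hq : ∃ j, q j ∉ I) :
    ∃ n, ∑ i ∈ Finset.range (N + 1), p i * (dMulCoeff σ δ)^[i] q n ∉ I := by
  obtain ⟨i₀, hi₀, hpI⟩ := exists_greatest_not_of_forall_lt hpN hp
  obtain ⟨j₀, hj₀, hqI⟩ := exists_greatest_not_of_forall_lt hqM hq
  have hσI : ∀ x ∈ I, σ x ∈ I := fun x => (hσ x).2
  have hσ_iter : ∀ k x, σ^[k] x ∈ I → x ∈ I := fun k => by
    induction k with
    | zero => exact fun _ h => h
    | succ k ih => exact fun x h => (hσ x).1 (ih _ (by rwa [Function.iterate_succ_apply] at h))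
  have hi₀N : i₀ ≤ N := by_contra fun h => hi₀ (hpN i₀ (by omega))
  refine ⟨i₀ + j₀, fun hsum => ?_⟩
  have hrest : ∑ i ∈ (Finset.range (N + 1)).erase i₀,
      p i * (dMulCoeff σ δ)^[i] q (i₀ + j₀) ∈ I := by
    refine I.sum_mem fun i hi => ?_
    rcases lt_or_gt_of_ne (Finset.ne_of_mem_erase hi) with h | h
    · exact I.mul_mem_left _
        (iterate_dMulCoeff_mem_of_lt hσI hδ hqI i _ (by omega))
    · exact I.mul_mem_right _ (hpI i h)
  rw [← Finset.add_sum_erase _ _ (a := i₀) (Finset.mem_range.2 (by omega))] at hsum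
  have hterm := I.sub_mem (I.sub_mem hsum hrest)
    (I.mul_mem_left (p i₀) (iterate_dMulCoeff_sub_mem hσI hδ hqI i₀))
  rw [add_sub_cancel_right, add_comm j₀, ← mul_sub, sub_sub_cancel] at hterm
  rcases hI.mem_or_mem hterm with h | h
  · exact hi₀ h
  · exact hj₀ (hσ_iter i₀ _ h)

end DMulCoeff

lemma exists_dvd_not_isUnit_isPrime_span_C {R : Type*} [CommRing R] [IsPrincipalIdealRing R]
    {s : R} (hs : ¬IsUnit s) :
    ∃ t, t ∣ s ∧ ¬IsUnit t ∧ (Ideal.span {C t} : Ideal R[X]).IsPrime := by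
  obtain ⟨m, hm, hsm⟩ := Ideal.exists_le_maximal _ (Ideal.span_singleton_ne_top hs)
  have hmt : Ideal.span {Submodule.IsPrincipal.generator m} = m :=
    Submodule.IsPrincipal.span_singleton_generator m
  refine ⟨Submodule.IsPrincipal.generator m, ?_, fun h => hm.ne_top ?_, ?_⟩
  · rw [← Ideal.mem_span_singleton, hmt]
    exact hsm (Ideal.mem_span_singleton_self s)
  · rw [← hmt, Ideal.span_singleton_eq_top.2 h]
  · have := Ideal.isPrime_map_C_of_isPrime (P := m)
    rwa [← hmt, Ideal.map_span, Set.image_singleton] at this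

namespace OreAlg

variable {R : Type} [CommRing R] [IsDomain R] {A : Type} [Ring A] (O : OreAlg R A)

local notation "φ" => algebraMap R[X] (QX R)

lemma δ_zero : O.δ 0 = 0 := by
  simpa using O.δ_add 0 0

lemma C_dvd_σ_iff (t : R) (f : R[X]) : C t ∣ O.σ f ↔ C t ∣ f := by
  simpa only [O.σ_fix] using map_dvd_iff O.σ (a := C t) (b := f)

lemma C_dvd_δ {t : R} {f : R[X]} (h : C t ∣ f) : C t ∣ O.δ f := by
  obtain ⟨g, rfl⟩ := h
  exact ⟨O.δ g, O.δ_linear t g⟩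

def coeffAddHom (j : ℕ) : A →+ QX R :=
  AddMonoidHom.mk' (O.coeff · j) (O.coeff_add · · j)

lemma coeff_sum {ι : Type*} (F : Finset ι) (f : ι → A) (j : ℕ) :
    O.coeff (∑ i ∈ F, f i) j = ∑ i ∈ F, O.coeff (f i) j :=
  map_sum (O.coeffAddHom j) f F

lemma exists_bound_of_coeff {P : A} {c : ℕ → R[X]} (hP : ∀ i, O.coeff P i = φ (c i)) :
    ∃ N, ∀ i, N < i → c i = 0 := by
  obtain ⟨N, hN⟩ := O.coeff_bdd P
  exact ⟨N, fun i hi => IsFractionRing.injective (Polynomial R) (QX R)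
    (by rw [← hP i, hN i hi, map_zero])⟩

lemma eq_sum_of_coeff {X : A} {c : ℕ → R[X]} {N : ℕ} (hc : ∀ i, N < i → c i = 0)
    (hX : ∀ j, O.coeff X j = φ (c j)) :
    X = ∑ i ∈ Finset.range (N + 1), O.ι (φ (c i)) * O.D ^ i :=
  O.coeff_inj _ _ fun j => (hX j).trans
    (O.coeff_mk N (fun i => φ (c i)) (fun i hi => by rw [hc i hi, map_zero]) j).symm

lemma coeff_sum_mul_D_pow_succ {N : ℕ} {a : ℕ → QX R} (ha : ∀ n, N < n → a n = 0) (j : ℕ) :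
    O.coeff (∑ n ∈ Finset.range (N + 1), O.ι (a n) * O.D ^ (n + 1)) j
      = if j = 0 then 0 else a (j - 1) := by
  have hshift : ∑ n ∈ Finset.range (N + 1), O.ι (a n) * O.D ^ (n + 1)
      = ∑ n ∈ Finset.range (N + 1 + 1), O.ι (if n = 0 then 0 else a (n - 1)) * O.D ^ n := by
    simp [Finset.sum_range_succ' _ (N + 1)]
  rw [hshift, O.coeff_mk]
  intro n hn
  rw [if_neg (by omega), ha _ (by omega)]

lemma coeff_D_mul {X : A} {c : ℕ → R[X]} {N : ℕ} (hc : ∀ i, N < i → c i = 0)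
    (hX : ∀ j, O.coeff X j = φ (c j)) (n : ℕ) :
    O.coeff (O.D * X) n = φ (dMulCoeff (O.σ : R[X] →+* R[X]) O.δ c n) := by
  have hDX : O.D * X
      = ∑ i ∈ Finset.range (N + 1), O.ι (φ (O.σ (c i))) * O.D ^ (i + 1)
        + ∑ i ∈ Finset.range (N + 1), O.ι (φ (O.δ (c i))) * O.D ^ i := by
    rw [O.eq_sum_of_coeff hc hX, Finset.mul_sum, ← Finset.sum_add_distrib]
    refine Finset.sum_congr rfl fun i _ => ?_
    rw [← mul_assoc, O.comm_rule, add_mul, mul_assoc, ← pow_succ']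
  rw [hDX, O.coeff_add,
    O.coeff_sum_mul_D_pow_succ (fun i hi => by rw [hc i hi, map_zero, map_zero]),
    O.coeff_mk N _ (fun i hi => by rw [hc i hi, O.δ_zero, map_zero])]
  cases n <;> simp [dMulCoeff]

lemma coeff_D_pow_mul {Q : A} {c : ℕ → R[X]} {N : ℕ} (hc : ∀ j, N < j → c j = 0)
    (hQ : ∀ j, O.coeff Q j = φ (c j)) (i n : ℕ) :
    O.coeff (O.D ^ i * Q) n
      = φ ((dMulCoeff (O.σ : R[X] →+* R[X]) O.δ)^[i] c n) := by
  induction i generalizing Q c N with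
  | zero => simpa using hQ n
  | succ i ih =>
    have hDc : ∀ j, N + 1 < j → dMulCoeff (O.σ : R[X] →+* R[X]) O.δ c j = 0 := by
      simpa only [Ideal.mem_bot] using dMulCoeff_mem_of_lt (I := ⊥)
        (fun x hx => by simp_all) (fun x hx => by simp_all [O.δ_zero]) (by simpa using hc)
    rw [pow_succ, mul_assoc, ih hDc (O.coeff_D_mul hc hQ), Function.iterate_succ_apply]

lemma coeff_mul_eq_sum {P Q : A} {pc qc : ℕ → R[X]} {N M : ℕ}
    (hpc : ∀ i, N < i → pc i = 0) (hP : ∀ i, O.coeff P i = φ (pc i))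
    (hqc : ∀ j, M < j → qc j = 0) (hQ : ∀ j, O.coeff Q j = φ (qc j)) (n : ℕ) :
    O.coeff (P * Q) n = φ (∑ i ∈ Finset.range (N + 1),
      pc i * (dMulCoeff (O.σ : R[X] →+* R[X]) O.δ)^[i] qc n) := by
  rw [O.eq_sum_of_coeff hpc hP, Finset.sum_mul, O.coeff_sum, map_sum]
  refine Finset.sum_congr rfl fun i _ => ?_
  rw [mul_assoc, O.coeff_smul, O.coeff_D_pow_mul hqc hQ, map_mul]

end OreAlg

/-- Gauss's lemma for Ore operators: if `P` and `Q` in `R[x][∂]`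
are `R`-primitive (no non-unit of `R` divides all their coefficients), then so is
their noncommutative Ore product `P·Q`. -/
theorem ore_gauss_lemma {R : Type} [CommRing R] [IsDomain R]
    [IsPrincipalIdealRing R] {A : Type} [Ring A] (O : OreAlg R A)
    (P Q : A) (pc qc rc : ℕ → R[X])
    (hP : ∀ i, O.coeff P i = algebraMap (Polynomial R) (QX R) (pc i))
    (hQ : ∀ i, O.coeff Q i = algebraMap (Polynomial R) (QX R) (qc i))
    (hPQ : ∀ i, O.coeff (P * Q) i = algebraMap (Polynomial R) (QX R) (rc i))
    (hPprim : ∀ s : R, (∀ i, C s ∣ pc i) → IsUnit s)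
    (hQprim : ∀ s : R, (∀ i, C s ∣ qc i) → IsUnit s) :
    ∀ s : R, (∀ i, C s ∣ rc i) → IsUnit s := by
  intro s hs
  by_contra hsu
  obtain ⟨t, hts, ht, hI⟩ := exists_dvd_not_isUnit_isPrime_span_C hsu
  obtain ⟨N, hpc⟩ := O.exists_bound_of_coeff hP
  obtain ⟨M, hqc⟩ := O.exists_bound_of_coeff hQ
  have hsome_notMem : ∀ c : ℕ → R[X], (∀ s : R, (∀ i, C s ∣ c i) → IsUnit s) →
      ∃ i, c i ∉ Ideal.span {C t} := fun c hc => by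
    simpa only [Ideal.mem_span_singleton, not_forall] using mt (hc t) ht
  obtain ⟨n, hn⟩ := exists_sum_mul_iterate_dMulCoeff_notMem (σ := (O.σ : R[X] →+* R[X]))
    (fun f hf => Ideal.mem_span_singleton.2 (O.C_dvd_δ (Ideal.mem_span_singleton.1 hf))) hI
    (fun f => by simp only [Ideal.mem_span_singleton]; exact O.C_dvd_σ_iff t f)
    (fun i hi => by simp [hpc i hi]) (fun j (hj : M < j) => by simp [hqc j hj])
    (hsome_notMem pc hPprim) (hsome_notMem qc hQprim)
  have hrc : rc n = _ := IsFractionRing.injective (Polynomial R) (QX R)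
    ((hPQ n).symm.trans (O.coeff_mul_eq_sum hpc hP hqc hQ n))
  rw [← hrc, Ideal.mem_span_singleton] at hn
  exact hn ((map_dvd C hts).trans (hs n))
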